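/- arXiv:0801.4713 — 8 statements merged into one kernel-verified Lean document; each statement's English description precedes it below -/
import Mathlib

section
/- For every a, b ∈ ℚ_p with a ≠ 0, the function G(a,b)Ω(|·|_p) equals x ↦ |a|_p^{-1/2}·𝟙{|x−b|_p ≤ |a|_p}. Consequently the orbit {G(a,b)(Ω(|·|_p)) : a, b ∈ ℚ_p, a ≠ 0} is exactly the set of functions {x ↦ p^{-γ/2} Ω(|p^γ x − n|_p) : γ ∈ ℤ, n ∈ R₀}, and these functions are pairwise distinct. -/
open MeasureTheory

/-- Action of the `p`-adic affine group on complex-valued functions: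
`(G(a,b)f)(x) = |a|_p^{-1/2} f((x-b)/a)`. -/
noncomputable def Gact (p : ℕ) [Fact p.Prime] (a b : ℚ_[p]) (f : ℚ_[p] → ℂ) : ℚ_[p] → ℂ :=
  fun x => ((‖a‖ ^ (-(1/2) : ℝ) : ℝ) : ℂ) * f ((x - b) / a)

/-- `Ω(|x|_p)`: the indicator function of the unit ball `ℤ_p`. -/
noncomputable def Omega (p : ℕ) [Fact p.Prime] : ℚ_[p] → ℂ :=
  fun x => if ‖x‖ ≤ 1 then 1 else 0

/-- `R_σ`: the set of finite sums `∑_{l=-δ}^{σ-1} n_l p^l` with digits `n_l ∈ {0,…,p-1}`,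
a complete set of representatives of `ℚ_p / p^σ ℤ_p`. -/
def Rset (p : ℕ) [Fact p.Prime] (σ : ℤ) : Set ℚ_[p] :=
  { x | ∃ (δ : ℕ) (d : ℤ → ℕ), (∀ l, d l < p) ∧
      x = ∑ l ∈ Finset.Icc (-(δ : ℤ)) (σ - 1), (d l : ℚ_[p]) * (p : ℚ_[p]) ^ l }

/-
Since `‖(x - b) / a‖ ≤ 1 ↔ ‖x - b‖ ≤ ‖a‖`, `G(a,b)Ω` is `|a|_p^{-1/2}` times the indicator of the
closed ball of radius `|a|_p` about `b`, and in the ultrametric `ℚ_p` every point of a ball is a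
centre of it. Writing `|a|_p = p^γ` and taking the representative `n ∈ R₀` of `p^γ b` modulo `ℤ_p`
moves the centre to `p^{-γ} n`, which gives the orbit. Elements of `R₀` are the fractions
`m / p^δ` with `m < p^δ`, so two of them congruent modulo `ℤ_p` are equal; evaluating at the
centre `p^{-γ} n` recovers `p^{-γ/2}`, hence `γ`, and then `n`.
-/

open Finset

theorem Nat.sum_range_div_pow_mod_mul_pow (b : ℕ) :
    ∀ {δ m : ℕ}, m < b ^ δ → ∑ j ∈ range δ, m / b ^ j % b * b ^ j = m := by
  intro δ
  induction δ with
  | zero => simp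
  | succ δ ih =>
    intro m hm
    have hb : 0 < b := Nat.pos_of_ne_zero (by rintro rfl; simp at hm)
    have hdiv : m / b < b ^ δ := (Nat.div_lt_iff_lt_mul hb).2 (by rwa [← pow_succ])
    have hshift : ∀ j, m / b ^ (j + 1) % b * b ^ (j + 1) = m / b / b ^ j % b * b ^ j * b := by
      intro j
      rw [pow_succ', ← Nat.div_div_eq_div_mul]
      ring
    rw [sum_range_succ', funext hshift, ← sum_mul, ih hdiv]
    simpa [mul_comm] using Nat.div_add_mod m b

theorem Nat.sum_range_mul_pow_lt {b : ℕ} {c : ℕ → ℕ} (hc : ∀ j, c j < b) (δ : ℕ) :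
    ∑ j ∈ range δ, c j * b ^ j < b ^ δ := by
  induction δ with
  | zero => simp
  | succ δ ih =>
    rw [sum_range_succ, pow_succ]
    have hpow : 0 < b ^ δ := Nat.pow_pos (Nat.zero_lt_of_lt (hc 0))
    nlinarith [hc δ]

theorem Finset.sum_Icc_neg_natCast_neg_one {M : Type*} [AddCommMonoid M] (f : ℤ → M) (δ : ℕ) :
    ∑ l ∈ Icc (-(δ : ℤ)) (-1), f l = ∑ j ∈ range δ, f (j - δ) := by
  refine sum_nbij' (fun l => (l + δ).toNat) (fun j => (j : ℤ) - δ) ?_ ?_ ?_ ?_ ?_ <;>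
    intro l hl <;> simp only [mem_Icc, mem_range] at hl ⊢
  all_goals first | omega | (congr 1; omega)

namespace Padic

variable {p : ℕ} [Fact p.Prime]

theorem p_ne_zero : (p : ℚ_[p]) ≠ 0 :=
  Nat.cast_ne_zero.mpr (Fact.out : p.Prime).ne_zero

theorem mem_Rset_zero_iff {n : ℚ_[p]} :
    n ∈ Rset p 0 ↔ ∃ δ m : ℕ, m < p ^ δ ∧ n = m / (p : ℚ_[p]) ^ δ := by
  have hsummand : ∀ (δ j : ℕ) (c : ℕ), (c : ℚ_[p]) * (p : ℚ_[p]) ^ ((j : ℤ) - δ)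
      = ((c * p ^ j : ℕ) : ℚ_[p]) / (p : ℚ_[p]) ^ δ := by
    intro δ j c
    rw [zpow_sub₀ p_ne_zero, zpow_natCast, zpow_natCast]
    push_cast
    ring
  simp only [Rset, zero_sub, Set.mem_ofPred_eq, Finset.sum_Icc_neg_natCast_neg_one, hsummand,
    ← Finset.sum_div, ← Nat.cast_sum]
  constructor
  · rintro ⟨δ, d, hd, rfl⟩
    exact ⟨δ, _, Nat.sum_range_mul_pow_lt (fun j => hd _) δ, rfl⟩
  · rintro ⟨δ, m, hm, rfl⟩
    refine ⟨δ, fun l => m / p ^ (l + δ).toNat % p, fun l => Nat.mod_lt _ (NeZero.pos p), ?_⟩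
    simp only [sub_add_cancel, Int.toNat_natCast, Nat.sum_range_div_pow_mod_mul_pow p hm]

theorem eq_of_norm_natCast_div_pow_sub_le_one {δ m m' : ℕ} (hm : m < p ^ δ) (hm' : m' < p ^ δ)
    (h : ‖(m : ℚ_[p]) / (p : ℚ_[p]) ^ δ - m' / (p : ℚ_[p]) ^ δ‖ ≤ 1) : m = m' := by
  have hnorm : ‖(((m : ℤ) - m' : ℤ) : ℚ_[p])‖ ≤ (p : ℝ) ^ (-(δ : ℤ)) := by
    have : (((m : ℤ) - m' : ℤ) : ℚ_[p])
        = ((m : ℚ_[p]) / (p : ℚ_[p]) ^ δ - m' / (p : ℚ_[p]) ^ δ) * (p : ℚ_[p]) ^ δ := by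
      rw [sub_mul, div_mul_cancel₀ _ (pow_ne_zero _ p_ne_zero),
        div_mul_cancel₀ _ (pow_ne_zero _ p_ne_zero)]
      push_cast
      rfl
    rw [this, norm_mul, norm_p_pow]
    exact mul_le_of_le_one_left (by positivity) h
  have hmod : m' ≡ m [MOD p ^ δ] := by
    rw [Nat.modEq_iff_dvd]
    exact_mod_cast (norm_int_le_pow_iff_dvd _ _).1 hnorm
  exact (hmod.eq_of_lt_of_lt hm' hm).symm

theorem eq_of_mem_Rset_zero_of_norm_sub_le_one {n n' : ℚ_[p]} (hn : n ∈ Rset p 0)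
    (hn' : n' ∈ Rset p 0) (h : ‖n - n'‖ ≤ 1) : n = n' := by
  obtain ⟨δ, m, hm, rfl⟩ := mem_Rset_zero_iff.1 hn
  obtain ⟨δ', m', hm', rfl⟩ := mem_Rset_zero_iff.1 hn'
  have hcommon : ∀ k l c : ℕ,
      (c : ℚ_[p]) / (p : ℚ_[p]) ^ k = ((c * p ^ l : ℕ) : ℚ_[p]) / (p : ℚ_[p]) ^ (k + l) := by
    intro k l c
    rw [pow_add, Nat.cast_mul, Nat.cast_pow, mul_div_mul_right _ _ (pow_ne_zero _ p_ne_zero)]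
  have hp : 0 < p := (Fact.out : p.Prime).pos
  have hlt : ∀ {k l c : ℕ}, c < p ^ k → c * p ^ l < p ^ (k + l) := fun hc => by
    rw [pow_add]; exact Nat.mul_lt_mul_of_pos_right hc (by positivity)
  rw [hcommon δ δ' m, hcommon δ' δ m', add_comm δ' δ] at h ⊢
  rw [eq_of_norm_natCast_div_pow_sub_le_one (hlt hm) (add_comm δ' δ ▸ hlt hm') h]

theorem exists_mem_Rset_zero_norm_sub_le_one (y : ℚ_[p]) :
    ∃ n ∈ Rset p 0, ‖y - n‖ ≤ 1 := by
  have hp : (1 : ℝ) < p := by exact_mod_cast (Fact.out : p.Prime).one_lt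
  obtain ⟨δ, hδ⟩ : ∃ δ : ℕ, ‖y * (p : ℚ_[p]) ^ δ‖ ≤ 1 := by
    rcases eq_or_ne y 0 with rfl | hy
    · exact ⟨0, by simp⟩
    · refine ⟨(-y.valuation).toNat, ?_⟩
      rw [norm_mul, norm_p_pow, norm_eq_zpow_neg_valuation hy, ← zpow_add₀ (by positivity)]
      exact zpow_le_one_of_nonpos₀ hp.le (by omega)
  set z : ℤ_[p] := ⟨y * (p : ℚ_[p]) ^ δ, hδ⟩
  have happr : ‖y * (p : ℚ_[p]) ^ δ - z.appr δ‖ ≤ (p : ℝ) ^ (-(δ : ℤ)) :=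
    (PadicInt.norm_le_pow_iff_mem_span_pow _ _).2 (PadicInt.appr_spec δ z)
  refine ⟨z.appr δ / (p : ℚ_[p]) ^ δ, mem_Rset_zero_iff.2 ⟨δ, _, PadicInt.appr_lt z δ, rfl⟩, ?_⟩
  have hpδ : (p : ℚ_[p]) ^ δ ≠ 0 := pow_ne_zero _ p_ne_zero
  rw [← mul_div_cancel_right₀ y hpδ, ← sub_div, norm_div, norm_p_pow,
    div_le_one (by positivity)]
  exact happr

end Padic

section AffineOrbit

open Padic

variable {p : ℕ} [Fact p.Prime]

noncomputable def omegaScaled (p : ℕ) [Fact p.Prime] (γ : ℤ) (n : ℚ_[p]) : ℚ_[p] → ℂ :=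
  fun x => (((p : ℝ) ^ (-(γ : ℝ) / 2) : ℝ) : ℂ) * Omega p ((p : ℚ_[p]) ^ γ * x - n)

theorem gact_omega {a : ℚ_[p]} (b : ℚ_[p]) (ha : a ≠ 0) :
    Gact p a b (Omega p)
      = fun x => ((‖a‖ ^ (-(1/2) : ℝ) : ℝ) : ℂ) * (if ‖x - b‖ ≤ ‖a‖ then 1 else 0) := by
  funext x
  simp only [Gact, Omega, norm_div, div_le_one (norm_pos_iff.mpr ha)]

theorem gact_omega_eq_of_norm_eq {a a' b b' : ℚ_[p]} (ha : a ≠ 0) (hnorm : ‖a'‖ = ‖a‖)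
    (hb : ‖b' - b‖ ≤ ‖a‖) : Gact p a' b' (Omega p) = Gact p a b (Omega p) := by
  have hball : Metric.closedBall b ‖a‖ = Metric.closedBall b' ‖a‖ :=
    IsUltrametricDist.closedBall_eq_of_mem (mem_closedBall_iff_norm.2 hb)
  rw [gact_omega b ha, gact_omega b' (norm_ne_zero_iff.1 (hnorm ▸ norm_ne_zero_iff.2 ha)), hnorm]
  simp only [Set.ext_iff, mem_closedBall_iff_norm] at hball
  simp only [hball]

theorem gact_omega_zpow (γ : ℤ) (n : ℚ_[p]) :
    Gact p ((p : ℚ_[p]) ^ (-γ)) ((p : ℚ_[p]) ^ (-γ) * n) (Omega p) = omegaScaled p γ n := by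
  have hp : (0 : ℝ) < p := by exact_mod_cast (Fact.out : p.Prime).pos
  funext x
  have harg : (x - (p : ℚ_[p]) ^ (-γ) * n) / (p : ℚ_[p]) ^ (-γ) = (p : ℚ_[p]) ^ γ * x - n := by
    rw [sub_div, mul_div_cancel_left₀ _ (zpow_ne_zero _ p_ne_zero), div_eq_mul_inv,
      ← zpow_neg, neg_neg, mul_comm]
  have hcoeff : ‖(p : ℚ_[p]) ^ (-γ)‖ ^ (-(1/2) : ℝ) = (p : ℝ) ^ (-(γ : ℝ) / 2) := by
    rw [norm_p_zpow, neg_neg, ← Real.rpow_intCast, ← Real.rpow_mul hp.le]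
    ring_nf
  simp only [Gact, omegaScaled, harg, hcoeff]

theorem exists_gact_omega_eq_omegaScaled {a : ℚ_[p]} (b : ℚ_[p]) (ha : a ≠ 0) :
    ∃ γ : ℤ, ∃ n ∈ Rset p 0, Gact p a b (Omega p) = omegaScaled p γ n := by
  set γ := -a.valuation
  have hnorm : ‖(p : ℚ_[p]) ^ (-γ)‖ = ‖a‖ := by
    rw [norm_p_zpow, norm_eq_zpow_neg_valuation ha, neg_neg]
  obtain ⟨n, hn, hbn⟩ := exists_mem_Rset_zero_norm_sub_le_one ((p : ℚ_[p]) ^ γ * b)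
  refine ⟨γ, n, hn, ?_⟩
  have hb : ‖(p : ℚ_[p]) ^ (-γ) * n - b‖ ≤ ‖a‖ := by
    have : (p : ℚ_[p]) ^ (-γ) * n - b = -((p : ℚ_[p]) ^ (-γ) * ((p : ℚ_[p]) ^ γ * b - n)) := by
      rw [mul_sub, ← mul_assoc, ← zpow_add₀ p_ne_zero, neg_add_cancel, zpow_zero, one_mul,
        neg_sub]
    rw [this, norm_neg, norm_mul, hnorm]
    exact mul_le_of_le_one_right (norm_nonneg a) hbn
  rw [← gact_omega_zpow, gact_omega_eq_of_norm_eq ha hnorm hb]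

theorem omegaScaled_apply (γ : ℤ) (n x : ℚ_[p]) :
    omegaScaled p γ n x
      = if ‖(p : ℚ_[p]) ^ γ * x - n‖ ≤ 1 then (((p : ℝ) ^ (-(γ : ℝ) / 2) : ℝ) : ℂ) else 0 := by
  simp only [omegaScaled, Omega, mul_ite, mul_one, mul_zero]

theorem eq_of_omegaScaled_eq {γ γ' : ℤ} {n n' : ℚ_[p]} (hn : n ∈ Rset p 0) (hn' : n' ∈ Rset p 0)
    (h : omegaScaled p γ n = omegaScaled p γ' n') : γ = γ' ∧ n = n' := by
  have hp : (1 : ℝ) < p := by exact_mod_cast (Fact.out : p.Prime).one_lt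
  set x₀ := (p : ℚ_[p]) ^ (-γ) * n
  have hcentre : ∀ m, (p : ℚ_[p]) ^ γ * x₀ - m = n - m := by
    intro m
    rw [← mul_assoc, ← zpow_add₀ p_ne_zero, add_neg_cancel, zpow_zero, one_mul]
  have hx₀ := congrFun h x₀
  rw [omegaScaled_apply, omegaScaled_apply, hcentre, sub_self, norm_zero,
    if_pos zero_le_one] at hx₀
  split_ifs at hx₀ with hball
  · have hγ : γ = γ' := by
      have hexp := Real.rpow_right_inj (by positivity) hp.ne' |>.1 (Complex.ofReal_injective hx₀)
      have hcast : (γ : ℝ) = γ' := by linarith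
      exact_mod_cast hcast
    subst hγ
    rw [hcentre] at hball
    exact ⟨rfl, eq_of_mem_Rset_zero_of_norm_sub_le_one hn hn' hball⟩
  · exact absurd (Complex.ofReal_eq_zero.1 hx₀) (by positivity)

end AffineOrbit

theorem stmt_0 (p : ℕ) [Fact p.Prime] :
    (∀ a b : ℚ_[p], a ≠ 0 →
      Gact p a b (Omega p) =
        fun x => ((‖a‖ ^ (-(1/2) : ℝ) : ℝ) : ℂ) * (if ‖x - b‖ ≤ ‖a‖ then 1 else 0)) ∧
    ({g : ℚ_[p] → ℂ | ∃ a b : ℚ_[p], a ≠ 0 ∧ g = Gact p a b (Omega p)} =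
      {g : ℚ_[p] → ℂ | ∃ γ : ℤ, ∃ n ∈ Rset p 0,
        g = fun x => (((p : ℝ) ^ (-(γ : ℝ) / 2) : ℝ) : ℂ) * Omega p ((p : ℚ_[p]) ^ γ * x - n)}) ∧
    (∀ γ γ' : ℤ, ∀ n n' : ℚ_[p], n ∈ Rset p 0 → n' ∈ Rset p 0 →
      (fun x => (((p : ℝ) ^ (-(γ : ℝ) / 2) : ℝ) : ℂ) * Omega p ((p : ℚ_[p]) ^ γ * x - n)) =
      (fun x => (((p : ℝ) ^ (-(γ' : ℝ) / 2) : ℝ) : ℂ) * Omega p ((p : ℚ_[p]) ^ γ' * x - n')) →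
      γ = γ' ∧ n = n') := by
  refine ⟨fun a b ha => gact_omega b ha, ?_, fun γ γ' n n' => eq_of_omegaScaled_eq⟩
  ext g
  constructor
  · rintro ⟨a, b, ha, rfl⟩
    exact exists_gact_omega_eq_omegaScaled b ha
  · rintro ⟨γ, n, -, rfl⟩
    exact ⟨_, _, zpow_ne_zero _ Padic.p_ne_zero, (gact_omega_zpow γ n).symm⟩
end

section
/- Let γ ∈ ℤ, n ∈ ℚ_p, and a, b ∈ ℚ_p with a ≠ 0. Then G(a,b) applied to the function x ↦ Ω(|p^γ x − n|_p) equals (as a function ℚ_p → ℂ) the function x ↦ Ω(|p^γ x − n|_p) itself if and only if |a|_p = 1 and |b − p^{-γ} n (1−a)|_p ≤ p^γ. In particular, G(a,b)(Ω(|·|_p)) = Ω(|·|_p) if and only if |a|_p = 1 and |b|_p ≤ 1. -/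
open MeasureTheory

lemma ball_shift (p : ℕ) [Fact p.Prime] (x c : ℚ_[p]) (h : ‖c‖ ≤ 1) :
    ‖x - c‖ ≤ 1 ↔ ‖x‖ ≤ 1 := by
  constructor
  · intro hx
    calc ‖x‖ = ‖(x - c) + c‖ := by ring_nf
    _ ≤ max ‖x - c‖ ‖c‖ := Padic.nonarchimedean _ _
    _ ≤ 1 := max_le hx h
  · intro hx
    calc ‖x - c‖ = ‖x + (-c)‖ := by ring_nf
    _ ≤ max ‖x‖ ‖(-c)‖ := Padic.nonarchimedean _ _
    _ ≤ 1 := max_le hx (by simpa using h)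

lemma gact_key (p : ℕ) [Fact p.Prime] (γ : ℤ) (n a b : ℚ_[p]) (ha : a ≠ 0) :
    (Gact p a b (fun x => Omega p ((p : ℚ_[p]) ^ γ * x - n)) =
        (fun x => Omega p ((p : ℚ_[p]) ^ γ * x - n)) ↔
      ‖a‖ = 1 ∧ ‖b - (p : ℚ_[p]) ^ (-γ) * n * (1 - a)‖ ≤ (p : ℝ) ^ γ) := by
  have hp0R : (0:ℝ) < (p:ℝ) := by exact_mod_cast (Fact.out (p := p.Prime)).pos
  have hpq0 : ((p:ℚ_[p])) ≠ 0 := by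
    exact_mod_cast Nat.cast_ne_zero.mpr (Fact.out (p := p.Prime)).ne_zero
  set c : ℚ_[p] := (p : ℚ_[p]) ^ γ * b - n * (1 - a) with hc
  -- condition rewrite
  have hzz : (p : ℚ_[p]) ^ γ * (p : ℚ_[p]) ^ (-γ) = 1 := by
    rw [← zpow_add₀ hpq0]; simp
  have hceq : c = (p : ℚ_[p]) ^ γ * (b - (p : ℚ_[p]) ^ (-γ) * n * (1 - a)) := by
    rw [hc]; linear_combination (n*(1-a)) * hzz
  have hcond : ‖b - (p : ℚ_[p]) ^ (-γ) * n * (1 - a)‖ ≤ (p : ℝ) ^ γ ↔ ‖c‖ ≤ 1 := by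
    rw [hceq, norm_mul, Padic.norm_p_zpow]
    rw [show ((p:ℝ)^(-γ)) = ((p:ℝ)^γ)⁻¹ from zpow_neg _ _,
      inv_mul_le_iff₀ (zpow_pos hp0R γ), mul_one]
  -- norm identity
  have hnormid : ‖a‖ = 1 → ∀ x : ℚ_[p],
      ‖(p : ℚ_[p]) ^ γ * ((x - b) / a) - n‖ = ‖((p : ℚ_[p]) ^ γ * x - n) - c‖ := by
    intro ha1 x
    have : (p : ℚ_[p]) ^ γ * ((x - b) / a) - n =
        (((p : ℚ_[p]) ^ γ * x - n) - c) / a := by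
      field_simp; ring
    rw [this, norm_div, ha1, div_one]
  constructor
  · intro h
    -- evaluate at x₀ = p^{-γ} * n
    have h0 := congrFun h ((p : ℚ_[p]) ^ (-γ) * n)
    simp only [Gact, Omega] at h0
    have harg : (p : ℚ_[p]) ^ γ * ((p : ℚ_[p]) ^ (-γ) * n) - n = 0 := by
      rw [← mul_assoc, hzz]; ring
    rw [harg] at h0
    simp only [norm_zero, zero_le_one, if_true] at h0
    -- h0 : ‖a‖^(-1/2) * (if ... then 1 else 0) = 1
    have ha1 : ‖a‖ = 1 := by
      by_cases hcase : ‖(p : ℚ_[p]) ^ γ * (((p : ℚ_[p]) ^ (-γ) * n - b) / a) - n‖ ≤ 1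
      · rw [if_pos hcase, mul_one] at h0
        have h0' : (‖a‖ : ℝ) ^ (-(1/2) : ℝ) = 1 := by exact_mod_cast h0
        have hpos : (0:ℝ) < ‖a‖ := norm_pos_iff.mpr ha
        have h2 : ((‖a‖:ℝ) ^ (-(1/2):ℝ)) ^ ((-2:ℝ)) = 1 := by rw [h0', Real.one_rpow]
        rw [← Real.rpow_mul hpos.le] at h2
        norm_num at h2; exact h2
      · rw [if_neg hcase, mul_zero] at h0
        exact absurd h0 (by norm_num)
    refine ⟨ha1, hcond.mpr ?_⟩
    -- indicator at x₀ must be true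
    have hiter := hnormid ha1 ((p : ℚ_[p]) ^ (-γ) * n)
    rw [harg, zero_sub, norm_neg] at hiter
    by_cases hcase : ‖(p : ℚ_[p]) ^ γ * (((p : ℚ_[p]) ^ (-γ) * n - b) / a) - n‖ ≤ 1
    · rw [← hiter]; exact hcase
    · rw [if_neg hcase, mul_zero] at h0
      exact absurd h0 (by norm_num)
  · rintro ⟨ha1, hb⟩
    have hc1 : ‖c‖ ≤ 1 := hcond.mp hb
    funext x
    simp only [Gact, Omega, ha1, Real.one_rpow, Complex.ofReal_one, one_mul]
    rw [hnormid ha1 x]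
    by_cases hx : ‖(p : ℚ_[p]) ^ γ * x - n‖ ≤ 1
    · rw [if_pos ((ball_shift p _ c hc1).mpr hx), if_pos hx]
    · rw [if_neg (fun hcon => hx ((ball_shift p _ c hc1).mp hcon)), if_neg hx]

theorem stmt_1 (p : ℕ) [Fact p.Prime] (γ : ℤ) (n : ℚ_[p]) (a b : ℚ_[p]) (ha : a ≠ 0) :
    (Gact p a b (fun x => Omega p ((p : ℚ_[p]) ^ γ * x - n)) =
        (fun x => Omega p ((p : ℚ_[p]) ^ γ * x - n)) ↔
      ‖a‖ = 1 ∧ ‖b - (p : ℚ_[p]) ^ (-γ) * n * (1 - a)‖ ≤ (p : ℝ) ^ γ) ∧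
    (Gact p a b (Omega p) = Omega p ↔ ‖a‖ = 1 ∧ ‖b‖ ≤ 1) := by
  refine ⟨gact_key p γ n a b ha, ?_⟩
  have h := gact_key p 0 0 a b ha
  have hfun : (fun x => Omega p ((p : ℚ_[p]) ^ (0:ℤ) * x - 0)) = Omega p := by
    funext x; simp
  rw [hfun] at h
  simpa using h
end

section
/- For every γ ∈ ℤ, n ∈ ℚ_p, j ∈ {1,…,p−1} and m ∈ {0,…,p−1}, one has the identity of functions G(p^{-γ} j^{-1}, p^{-γ}(n − m·j^{-1}))ψ = χ(m·p^{-1})·ψ_{γ n j}, where j and m are regarded as elements of ℚ_p. -/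
open MeasureTheory

/-- The `p`-adic wavelet `ψ_{γ n j}(x) = p^{-γ/2} χ(p⁻¹ j (p^γ x - n)) Ω(|p^γ x - n|_p)`. -/
noncomputable def wavelet (p : ℕ) [Fact p.Prime] (χ : ℚ_[p] → ℂ) (γ : ℤ) (n : ℚ_[p]) (j : ℕ) :
    ℚ_[p] → ℂ :=
  fun x => (((p : ℝ) ^ (-(γ : ℝ) / 2) : ℝ) : ℂ) *
    χ ((p : ℚ_[p])⁻¹ * (j : ℚ_[p]) * ((p : ℚ_[p]) ^ γ * x - n)) *
    Omega p ((p : ℚ_[p]) ^ γ * x - n)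

/-- The basic `p`-adic wavelet `ψ(x) = χ(p⁻¹ x) Ω(|x|_p)`. -/
noncomputable def psiw (p : ℕ) [Fact p.Prime] (χ : ℚ_[p] → ℂ) : ℚ_[p] → ℂ :=
  fun x => χ ((p : ℚ_[p])⁻¹ * x) * Omega p x

/-! The group element acts through the inverse affine map: `(x - b) / a = j u + m` with
`u = p^γ x - n`. Multiplication by the unit `j` and translation by the integer `m` preserve `ℤ_p`,
so `Ω(|j u + m|_p) = Ω(|u|_p)`; additivity of `χ` splits off the constant `χ(m p⁻¹)`; and
`|a|_p^{-1/2} = p^{-γ/2}`. -/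

theorem IsUltrametricDist.norm_add_le_iff_of_norm_le {E : Type*} [SeminormedAddCommGroup E]
    [IsUltrametricDist E] {x b : E} {r : ℝ} (hb : ‖b‖ ≤ r) : ‖x + b‖ ≤ r ↔ ‖x‖ ≤ r := by
  refine ⟨fun h => ?_, fun h => (norm_add_le_max x b).trans (max_le h hb)⟩
  simpa using (norm_add_le_max (x + b) (-b)).trans (max_le h (by rwa [norm_neg]))

section

variable {p : ℕ} [Fact p.Prime]

theorem Padic.norm_natCast_le_one (m : ℕ) : ‖(m : ℚ_[p])‖ ≤ 1 := by
  exact_mod_cast Padic.norm_int_le_one (m : ℤ)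

theorem Padic.norm_natCast_eq_one_of_pos_of_lt {j : ℕ} (hj0 : 0 < j) (hjp : j < p) :
    ‖(j : ℚ_[p])‖ = 1 :=
  Padic.norm_natCast_eq_one_iff.mpr <|
    (Nat.Prime.coprime_iff_not_dvd Fact.out).mpr (Nat.not_dvd_of_pos_of_lt hj0 hjp)

theorem Omega_mul_add {a b : ℚ_[p]} (ha : ‖a‖ = 1) (hb : ‖b‖ ≤ 1) (u : ℚ_[p]) :
    Omega p (a * u + b) = Omega p u := by
  simp only [Omega, IsUltrametricDist.norm_add_le_iff_of_norm_le hb, norm_mul, ha, one_mul]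

theorem Gact_apply_inv_mul {a c : ℚ_[p]} (ha : a ≠ 0) (hc : c ≠ 0) (b n : ℚ_[p])
    (f : ℚ_[p] → ℂ) (x : ℚ_[p]) :
    Gact p (c⁻¹ * a⁻¹) (c⁻¹ * (n - b * a⁻¹)) f x =
      ((‖c⁻¹ * a⁻¹‖ ^ (-(1/2) : ℝ) : ℝ) : ℂ) * f (a * (c * x - n) + b) := by
  simp only [Gact]
  congr 2
  field_simp
  ring

theorem norm_p_zpow_neg_mul_rpow {a : ℚ_[p]} (ha : ‖a‖ = 1) (γ : ℤ) :
    ‖(p : ℚ_[p]) ^ (-γ) * a‖ ^ (-(1/2) : ℝ) = (p : ℝ) ^ (-(γ : ℝ) / 2) := by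
  rw [norm_mul, ha, mul_one, Padic.norm_p_zpow, neg_neg, ← Real.rpow_intCast,
    ← Real.rpow_mul (Nat.cast_nonneg p)]
  ring_nf

end

theorem stmt_3_general (p : ℕ) [Fact p.Prime] (χ : ℚ_[p] → ℂ)
    (hχ_add : ∀ x y : ℚ_[p], χ (x + y) = χ x * χ y)
    (γ : ℤ) (n : ℚ_[p]) (j m : ℕ) (hj : 1 ≤ j ∧ j ≤ p - 1) :
    Gact p ((p : ℚ_[p]) ^ (-γ) * (j : ℚ_[p])⁻¹)
        ((p : ℚ_[p]) ^ (-γ) * (n - (m : ℚ_[p]) * (j : ℚ_[p])⁻¹)) (psiw p χ) =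
      fun x => χ ((m : ℚ_[p]) * (p : ℚ_[p])⁻¹) * wavelet p χ γ n j x := by
  have hp : p.Prime := Fact.out
  have hj_norm : ‖(j : ℚ_[p])‖ = 1 :=
    Padic.norm_natCast_eq_one_of_pos_of_lt hj.1 (by have := hp.two_le; omega)
  have hj0 : (j : ℚ_[p]) ≠ 0 := norm_ne_zero_iff.mp (hj_norm ▸ one_ne_zero)
  funext x
  rw [zpow_neg, Gact_apply_inv_mul hj0 (zpow_ne_zero γ (Nat.cast_ne_zero.mpr hp.ne_zero)),
    ← zpow_neg, norm_p_zpow_neg_mul_rpow (by rw [norm_inv, hj_norm, inv_one]), psiw,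
    Omega_mul_add hj_norm (Padic.norm_natCast_le_one m), mul_add, hχ_add, wavelet,
    mul_assoc (p : ℚ_[p])⁻¹, mul_comm (p : ℚ_[p])⁻¹ (m : ℚ_[p])]
  ring

theorem stmt_3 (p : ℕ) [Fact p.Prime] (χ : ℚ_[p] → ℂ)
    (hχ_add : ∀ x y : ℚ_[p], χ (x + y) = χ x * χ y)
    (hχ_norm : ∀ x : ℚ_[p], ‖χ x‖ = 1)
    (hχ_triv : ∀ x : ℚ_[p], ‖x‖ ≤ 1 → χ x = 1)
    (hχ_nontriv : χ ((p : ℚ_[p])⁻¹) ≠ 1)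
    (γ : ℤ) (n : ℚ_[p]) (j m : ℕ) (hj : 1 ≤ j ∧ j ≤ p - 1) (hm : m ≤ p - 1) :
    Gact p ((p : ℚ_[p]) ^ (-γ) * (j : ℚ_[p])⁻¹)
        ((p : ℚ_[p]) ^ (-γ) * (n - (m : ℚ_[p]) * (j : ℚ_[p])⁻¹)) (psiw p χ) =
      fun x => χ ((m : ℚ_[p]) * (p : ℚ_[p])⁻¹) * wavelet p χ γ n j x :=
  stmt_3_general p χ hχ_add γ n j m hj
end

section
/- Let γ ∈ ℤ, n ∈ ℚ_p, j ∈ {1,…,p−1}, and let a, b ∈ ℚ_p satisfy |a − 1|_p ≤ p^{-1} and |p^γ b − n(1−a)|_p ≤ p^{-1}. Then G(a,b)ψ_{γ n j} = ψ_{γ n j} (equality of functions ℚ_p → ℂ). -/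
open MeasureTheory

/-! Since `|a|_p = 1`, the value `ψ_{γnj}((x - b)/a)` is `p^{-γ/2} ψ_j((u - c)/a)`, where
`ψ_j(u) = χ(p⁻¹ j u) Ω(u)`, `u = p^γ x - n` and `c = p^γ b - n(1 - a) ∈ pℤ_p`. For `u ∈ ℤ_p` the map
`u ↦ (u - c)/a` moves `u` by `(u(1 - a) - c)/a ∈ pℤ_p`, which `χ(p⁻¹ j ·)` does not see; for
`u ∉ ℤ_p` it preserves `|u|_p`, so `Ω` vanishes at both points. -/

lemma eq_of_norm_sub_le_one_of_add {G M : Type*} [SeminormedAddGroup G] [Monoid M] {χ : G → M}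
    (hχ_add : ∀ x y : G, χ (x + y) = χ x * χ y) (hχ_triv : ∀ x : G, ‖x‖ ≤ 1 → χ x = 1)
    {x y : G} (h : ‖x - y‖ ≤ 1) : χ x = χ y := by
  rw [← sub_add_cancel x y, hχ_add, hχ_triv _ h, one_mul]

lemma norm_eq_one_of_norm_sub_one_lt_one {R : Type*} [SeminormedRing R] [NormOneClass R]
    [IsUltrametricDist R] {a : R} (ha : ‖a - 1‖ < 1) : ‖a‖ = 1 := by
  have hne : ‖a - 1‖ ≠ ‖(1 : R)‖ := by rw [norm_one]; exact ha.ne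
  rw [← sub_add_cancel a 1, IsUltrametricDist.norm_add_eq_max_of_norm_ne_norm hne, norm_one,
    max_eq_right ha.le]

namespace Padic

variable {p : ℕ} [Fact p.Prime]

lemma one_lt_natCast_prime : (1 : ℝ) < p := by exact_mod_cast (Fact.out : p.Prime).one_lt

lemma norm_eq_one_of_norm_sub_one_le {a : ℚ_[p]} (ha : ‖a - 1‖ ≤ (p : ℝ)⁻¹) : ‖a‖ = 1 :=
  norm_eq_one_of_norm_sub_one_lt_one (ha.trans_lt (inv_lt_one_of_one_lt₀ one_lt_natCast_prime))

lemma Gact_of_norm_eq_one {a : ℚ_[p]} (ha : ‖a‖ = 1) (b : ℚ_[p]) (f : ℚ_[p] → ℂ) :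
    Gact p a b f = fun x => f ((x - b) / a) := by
  funext x
  simp [Gact, ha]

lemma Omega_congr_norm {x y : ℚ_[p]} (h : ‖x‖ = ‖y‖) : Omega p x = Omega p y := by
  simp only [Omega, h]

lemma Omega_sub_of_norm_le_one (u : ℚ_[p]) {c : ℚ_[p]} (hc : ‖c‖ ≤ 1) :
    Omega p (u - c) = Omega p u := by
  have hle : ∀ x y : ℚ_[p], ‖y‖ ≤ 1 → ‖x‖ ≤ 1 → ‖x + y‖ ≤ 1 := fun x y hy hx =>
    (IsUltrametricDist.norm_add_le_max x y).trans (max_le hx hy)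
  have hiff : ‖u - c‖ ≤ 1 ↔ ‖u‖ ≤ 1 :=
    ⟨fun h => by simpa using hle (u - c) c hc h,
     fun h => by simpa [sub_eq_add_neg] using hle u (-c) (by rwa [norm_neg]) h⟩
  simp only [Omega, hiff]

lemma norm_div_sub_sub_le {a c u : ℚ_[p]} (ha : ‖a - 1‖ ≤ (p : ℝ)⁻¹) (hc : ‖c‖ ≤ (p : ℝ)⁻¹)
    (hu : ‖u‖ ≤ 1) : ‖(u - c) / a - u‖ ≤ (p : ℝ)⁻¹ := by
  have ha_one := norm_eq_one_of_norm_sub_one_le ha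
  have ha0 : a ≠ 0 := norm_ne_zero_iff.mp (by rw [ha_one]; exact one_ne_zero)
  have hu_shift : ‖u * (1 - a)‖ ≤ (p : ℝ)⁻¹ := by
    rw [norm_mul, ← norm_neg (1 - a), neg_sub]
    exact (mul_le_of_le_one_left (norm_nonneg _) hu).trans ha
  calc ‖(u - c) / a - u‖ = ‖u * (1 - a) + -c‖ := by
        rw [show (u - c) / a - u = (u * (1 - a) + -c) / a by field_simp; ring, norm_div,
          ha_one, div_one]
    _ ≤ (p : ℝ)⁻¹ := (IsUltrametricDist.norm_add_le_max _ _).trans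
        (max_le hu_shift (by rwa [norm_neg]))

lemma apply_inv_p_mul_eq_of_norm_sub_le {χ : ℚ_[p] → ℂ}
    (hχ_add : ∀ x y : ℚ_[p], χ (x + y) = χ x * χ y) (hχ_triv : ∀ x : ℚ_[p], ‖x‖ ≤ 1 → χ x = 1)
    (j : ℕ) {u v : ℚ_[p]} (h : ‖v - u‖ ≤ (p : ℝ)⁻¹) :
    χ ((p : ℚ_[p])⁻¹ * j * v) = χ ((p : ℚ_[p])⁻¹ * j * u) := by
  refine eq_of_norm_sub_le_one_of_add hχ_add hχ_triv ?_
  calc ‖(p : ℚ_[p])⁻¹ * j * v - (p : ℚ_[p])⁻¹ * j * u‖ = p * ‖(j : ℚ_[p])‖ * ‖v - u‖ := by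
        rw [← mul_sub, norm_mul, norm_mul, norm_inv, norm_p, inv_inv]
    _ ≤ p * 1 * (p : ℝ)⁻¹ := by
        gcongr
        exact IsUltrametricDist.norm_natCast_le_one ℚ_[p] j
    _ = 1 := by rw [mul_one, mul_inv_cancel₀ (zero_lt_one.trans one_lt_natCast_prime).ne']

noncomputable def motherWavelet (p : ℕ) [Fact p.Prime] (χ : ℚ_[p] → ℂ) (j : ℕ) (u : ℚ_[p]) : ℂ :=
  χ ((p : ℚ_[p])⁻¹ * j * u) * Omega p u

lemma wavelet_eq_motherWavelet (χ : ℚ_[p] → ℂ) (γ : ℤ) (n : ℚ_[p]) (j : ℕ) (x : ℚ_[p]) :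
    wavelet p χ γ n j x =
      (((p : ℝ) ^ (-(γ : ℝ) / 2) : ℝ) : ℂ) * motherWavelet p χ j ((p : ℚ_[p]) ^ γ * x - n) :=
  mul_assoc _ _ _

lemma motherWavelet_div_sub {χ : ℚ_[p] → ℂ}
    (hχ_add : ∀ x y : ℚ_[p], χ (x + y) = χ x * χ y) (hχ_triv : ∀ x : ℚ_[p], ‖x‖ ≤ 1 → χ x = 1)
    (j : ℕ) {a c : ℚ_[p]} (ha : ‖a - 1‖ ≤ (p : ℝ)⁻¹) (hc : ‖c‖ ≤ (p : ℝ)⁻¹) (u : ℚ_[p]) :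
    motherWavelet p χ j ((u - c) / a) = motherWavelet p χ j u := by
  have hΩ : Omega p ((u - c) / a) = Omega p u := by
    rw [Omega_congr_norm (y := u - c)
        (by rw [norm_div, norm_eq_one_of_norm_sub_one_le ha, div_one]),
      Omega_sub_of_norm_le_one u (hc.trans (inv_le_one_of_one_le₀ one_lt_natCast_prime.le))]
  unfold motherWavelet
  rw [hΩ]
  by_cases hu : ‖u‖ ≤ 1
  · rw [apply_inv_p_mul_eq_of_norm_sub_le hχ_add hχ_triv j (norm_div_sub_sub_le ha hc hu)]
  · simp [Omega, hu]

end Padic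

theorem stmt_4_general (p : ℕ) [Fact p.Prime] (χ : ℚ_[p] → ℂ)
    (hχ_add : ∀ x y : ℚ_[p], χ (x + y) = χ x * χ y)
    (hχ_triv : ∀ x : ℚ_[p], ‖x‖ ≤ 1 → χ x = 1)
    (γ : ℤ) (n : ℚ_[p]) (j : ℕ)
    (a b : ℚ_[p]) (ha : ‖a - 1‖ ≤ (p : ℝ) ^ (-1 : ℤ))
    (hb : ‖(p : ℚ_[p]) ^ γ * b - n * (1 - a)‖ ≤ (p : ℝ) ^ (-1 : ℤ)) :
    Gact p a b (wavelet p χ γ n j) = wavelet p χ γ n j := by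
  rw [zpow_neg_one] at ha hb
  have ha_one : ‖a‖ = 1 := Padic.norm_eq_one_of_norm_sub_one_le ha
  have ha0 : a ≠ 0 := norm_ne_zero_iff.mp (by rw [ha_one]; exact one_ne_zero)
  rw [Padic.Gact_of_norm_eq_one ha_one]
  funext x
  have harg : (p : ℚ_[p]) ^ γ * ((x - b) / a) - n =
      ((p : ℚ_[p]) ^ γ * x - n - ((p : ℚ_[p]) ^ γ * b - n * (1 - a))) / a := by
    field_simp
    ring
  rw [Padic.wavelet_eq_motherWavelet, Padic.wavelet_eq_motherWavelet, harg,
    Padic.motherWavelet_div_sub hχ_add hχ_triv j ha hb]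

theorem stmt_4 (p : ℕ) [Fact p.Prime] (χ : ℚ_[p] → ℂ)
    (hχ_add : ∀ x y : ℚ_[p], χ (x + y) = χ x * χ y)
    (hχ_norm : ∀ x : ℚ_[p], ‖χ x‖ = 1)
    (hχ_triv : ∀ x : ℚ_[p], ‖x‖ ≤ 1 → χ x = 1)
    (hχ_nontriv : χ ((p : ℚ_[p])⁻¹) ≠ 1)
    (γ : ℤ) (n : ℚ_[p]) (j : ℕ) (hj : 1 ≤ j ∧ j ≤ p - 1)
    (a b : ℚ_[p]) (ha : ‖a - 1‖ ≤ (p : ℝ) ^ (-1 : ℤ))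
    (hb : ‖(p : ℚ_[p]) ^ γ * b - n * (1 - a)‖ ≤ (p : ℝ) ^ (-1 : ℤ)) :
    Gact p a b (wavelet p χ γ n j) = wavelet p χ γ n j :=
  stmt_4_general p χ hχ_add hχ_triv γ n j a b ha hb
end

section
/- Let p ≥ 3 be prime, j ∈ {1,…,p−1}, and let a ∈ ℚ_p satisfy |a|_p = 1 and |a^{p−1} − 1|_p ≤ p^{-2}. Define f : ℚ_p → ℂ by f(x) = ∑_{i=0}^{p−2} ψ( j·p^{-1}·(a^{-i} x − 1) ), where j is regarded as an element of ℚ_p. Then f(a^{-1} x) = f(x) for all x ∈ ℚ_p, i.e. G(a,0)f = f. -/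
open MeasureTheory

/-
On the unit ball the wavelet `ψ` only sees `x` modulo `p ℤ_p`, and outside it `ψ` vanishes. Since
`|j/p|_p ≤ p`, multiplying `x` by a unit `u ≡ 1 (mod p²)` moves `(j/p)(x - 1)` by at most `p⁻¹` whenever
it lies in the unit ball, and keeps it outside otherwise; so `x ↦ ψ((j/p)(x - 1))` is invariant under
`x ↦ u x`. The terms of `f (a⁻¹ x)` are those of `f x` shifted by one index, and the term that falls off
the end equals the one that comes in because `u = a^{p-1}` is such a unit.
-/

open Finset IsUltrametricDist

theorem Finset.sum_range_succ_comp_of_apply_eq_apply_zero {M : Type*} [AddCommMonoid M]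
    [IsRightCancelAdd M] (g : ℕ → M) {n : ℕ} (h : g n = g 0) :
    ∑ i ∈ range n, g (i + 1) = ∑ i ∈ range n, g i :=
  add_right_cancel (b := g 0) <| by rw [← sum_range_succ', sum_range_succ, h]

section PadicWavelet

variable {p : ℕ} [Fact p.Prime] {χ : ℚ_[p] → ℂ}

theorem Padic.norm_inv_p : ‖(p : ℚ_[p])⁻¹‖ = p := by
  rw [norm_inv, Padic.norm_p, inv_inv]

theorem psiw_eq_zero_of_one_lt_norm {y : ℚ_[p]} (hy : 1 < ‖y‖) : psiw p χ y = 0 := by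
  simp [psiw, Omega, hy.not_ge]

theorem psiw_add_of_norm_le (hχ_add : ∀ x y : ℚ_[p], χ (x + y) = χ x * χ y)
    (hχ_triv : ∀ x : ℚ_[p], ‖x‖ ≤ 1 → χ x = 1) (y : ℚ_[p]) {z : ℚ_[p]}
    (hz : ‖z‖ ≤ (p : ℝ)⁻¹) : psiw p χ (y + z) = psiw p χ y := by
  have hp : (1 : ℝ) ≤ p := by exact_mod_cast (Fact.out : p.Prime).one_lt.le
  have hz₁ : ‖z‖ ≤ 1 := hz.trans (inv_le_one_of_one_le₀ hp)
  have hball : ‖y + z‖ ≤ 1 ↔ ‖y‖ ≤ 1 := by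
    refine ⟨fun h => ?_, fun h => (norm_add_le_max y z).trans (max_le h hz₁)⟩
    simpa using (norm_add_le_max (y + z) (-z)).trans (max_le h (by rwa [norm_neg]))
  have hχz : χ ((p : ℚ_[p])⁻¹ * z) = 1 := by
    refine hχ_triv _ ?_
    rw [norm_mul, Padic.norm_inv_p]
    calc (p : ℝ) * ‖z‖ ≤ p * (p : ℝ)⁻¹ := by gcongr
      _ = 1 := mul_inv_cancel₀ (by positivity)
  simp only [psiw, Omega, hball, mul_add, hχ_add, hχz, mul_one]

theorem psiw_mul_mul_sub_one (hχ_add : ∀ x y : ℚ_[p], χ (x + y) = χ x * χ y)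
    (hχ_triv : ∀ x : ℚ_[p], ‖x‖ ≤ 1 → χ x = 1) {c u : ℚ_[p]} (hc : ‖c‖ ≤ p)
    (hu : ‖u - 1‖ ≤ (p : ℝ) ^ (-2 : ℤ)) (x : ℚ_[p]) :
    psiw p χ (c * (u * x - 1)) = psiw p χ (c * (x - 1)) := by
  have hp : (1 : ℝ) < p := by exact_mod_cast (Fact.out : p.Prime).one_lt
  set y := c * (x - 1)
  have hsplit : c * (u * x - 1) = y + (u - 1) * (c * x) := by ring
  have hcx : ‖c * x‖ ≤ max ‖y‖ p := by
    simpa [y, mul_sub] using (norm_add_le_max y c).trans (max_le_max le_rfl hc)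
  have hz : ‖(u - 1) * (c * x)‖ ≤ ((p : ℝ) * p)⁻¹ * max ‖y‖ p := by
    rw [norm_mul, ← zpow_two, ← zpow_neg]
    exact mul_le_mul hu hcx (norm_nonneg _) (by positivity)
  rw [hsplit]
  rcases le_or_gt ‖y‖ 1 with hy | hy
  · refine psiw_add_of_norm_le hχ_add hχ_triv y (hz.trans_eq ?_)
    rw [max_eq_right (hy.trans hp.le)]
    field_simp
  · have hzy : ‖(u - 1) * (c * x)‖ < ‖y‖ :=
      calc ‖(u - 1) * (c * x)‖ ≤ ((p : ℝ) * p)⁻¹ * (p * ‖y‖) :=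
            hz.trans (by gcongr; exact max_le (by nlinarith) (by nlinarith))
        _ = ‖y‖ / p := by field_simp
        _ < ‖y‖ := div_lt_self (by linarith) hp
    rw [psiw_eq_zero_of_one_lt_norm hy, psiw_eq_zero_of_one_lt_norm]
    rwa [norm_add_eq_max_of_norm_ne_norm hzy.ne', max_eq_left hzy.le]

end PadicWavelet

theorem stmt_6_general (p : ℕ) [Fact p.Prime] (χ : ℚ_[p] → ℂ)
    (hχ_add : ∀ x y : ℚ_[p], χ (x + y) = χ x * χ y)
    (hχ_triv : ∀ x : ℚ_[p], ‖x‖ ≤ 1 → χ x = 1)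
    (j : ℕ) (a : ℚ_[p]) (ha' : ‖a ^ (p - 1) - 1‖ ≤ (p : ℝ) ^ (-2 : ℤ))
    (f : ℚ_[p] → ℂ)
    (hf : f = fun x => ∑ i ∈ Finset.range (p - 1),
      psiw p χ ((j : ℚ_[p]) * (p : ℚ_[p])⁻¹ * ((a ^ i)⁻¹ * x - 1))) :
    ∀ x : ℚ_[p], f (a⁻¹ * x) = f x := by
  intro x
  set c : ℚ_[p] := (j : ℚ_[p]) * (p : ℚ_[p])⁻¹
  set g : ℕ → ℂ := fun i => psiw p χ (c * ((a ^ i)⁻¹ * x - 1))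
  have hc : ‖c‖ ≤ p := by
    simpa [c, Padic.norm_inv_p] using
      mul_le_mul_of_nonneg_right (Padic.norm_int_le_one (p := p) j) (Nat.cast_nonneg (α := ℝ) p)
  have hunit : a ^ (p - 1) ≠ 0 := by
    have hp : (1 : ℝ) < p := by exact_mod_cast (Fact.out : p.Prime).one_lt
    rintro h
    rw [h, zero_sub, norm_neg, norm_one] at ha'
    exact ha'.not_gt (zpow_lt_one_of_neg₀ hp (by norm_num))
  have hperiod : g (p - 1) = g 0 := by
    simpa [g, hunit] using
      (psiw_mul_mul_sub_one hχ_add hχ_triv hc ha' ((a ^ (p - 1))⁻¹ * x)).symm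
  calc f (a⁻¹ * x) = ∑ i ∈ range (p - 1), g (i + 1) := by
        simp only [hf, g, pow_succ', mul_inv_rev, mul_assoc]
    _ = ∑ i ∈ range (p - 1), g i := sum_range_succ_comp_of_apply_eq_apply_zero g hperiod
    _ = f x := by rw [hf]

theorem stmt_6 (p : ℕ) [Fact p.Prime] (hp : 3 ≤ p) (χ : ℚ_[p] → ℂ)
    (hχ_add : ∀ x y : ℚ_[p], χ (x + y) = χ x * χ y)
    (hχ_norm : ∀ x : ℚ_[p], ‖χ x‖ = 1)
    (hχ_triv : ∀ x : ℚ_[p], ‖x‖ ≤ 1 → χ x = 1)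
    (hχ_nontriv : χ ((p : ℚ_[p])⁻¹) ≠ 1)
    (j : ℕ) (hj : 1 ≤ j ∧ j ≤ p - 1)
    (a : ℚ_[p]) (ha : ‖a‖ = 1) (ha' : ‖a ^ (p - 1) - 1‖ ≤ (p : ℝ) ^ (-2 : ℤ))
    (f : ℚ_[p] → ℂ)
    (hf : f = fun x => ∑ i ∈ Finset.range (p - 1),
      psiw p χ ((j : ℚ_[p]) * (p : ℚ_[p])⁻¹ * ((a ^ i)⁻¹ * x - 1))) :
    ∀ x : ℚ_[p], f (a⁻¹ * x) = f x :=
  stmt_6_general p χ hχ_add hχ_triv j a ha' f hf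
end

section
/- Let γ₁ ≤ γ₂ be integers, n₁, n₂ ∈ ℚ_p, and let a ∈ ℚ_p satisfy |1 − a|_p ≤ p^{-1}. Then there exists b ∈ ℚ_p with |p^{γ₁} b − n₁(1−a)|_p ≤ p^{-1} and |p^{γ₂} b − n₂(1−a)|_p ≤ p^{-1} if and only if |(p^{-γ₁} n₁ − p^{-γ₂} n₂)(1−a)|_p ≤ p^{γ₂−1}; and in that case the set of all such b is exactly the ball {b ∈ ℚ_p : |b − p^{-γ₁} n₁ (1−a)|_p ≤ p^{γ₁−1}}. -/
/-!
Multiplying by `p ^ (-γ)`, the condition `‖p ^ γ * b - n * (1 - a)‖ ≤ p⁻¹` says that `b` lies in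
the closed ball of radius `p ^ (γ - 1)` around `p ^ (-γ) * n * (1 - a)`. In an ultrametric space
two closed balls of radii `r ≤ s` meet iff the distance of their centres is at most `s`, and then
the smaller ball lies inside the larger one.
-/

open Metric

namespace IsUltrametricDist

variable {X : Type*} [PseudoMetricSpace X] [IsUltrametricDist X] {x y : X} {r s : ℝ}

lemma inter_closedBall_nonempty_iff (hr : 0 ≤ r) (hrs : r ≤ s) :
    (closedBall x r ∩ closedBall y s).Nonempty ↔ dist x y ≤ s := by
  refine ⟨fun ⟨z, hxz, hyz⟩ => ?_, fun h => ⟨x, mem_closedBall_self hr, h⟩⟩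
  exact (dist_triangle_max x z y).trans
    (max_le ((mem_closedBall'.mp hxz).trans hrs) hyz)

lemma closedBall_subset_closedBall_of_dist_le (hrs : r ≤ s) (h : dist x y ≤ s) :
    closedBall x r ⊆ closedBall y s := fun z hz =>
  (dist_triangle_max z x y).trans (max_le (le_trans hz hrs) h)

end IsUltrametricDist

namespace Padic

variable {p : ℕ} [Fact p.Prime]

lemma norm_zpow_mul_le_zpow_iff (γ k : ℤ) (z : ℚ_[p]) :
    ‖(p : ℚ_[p]) ^ γ * z‖ ≤ (p : ℝ) ^ k ↔ ‖z‖ ≤ (p : ℝ) ^ (γ + k) := by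
  have hp : (0 : ℝ) < p := by exact_mod_cast (Fact.out : p.Prime).pos
  rw [norm_mul, norm_p_zpow, zpow_add₀ hp.ne', zpow_neg, inv_mul_le_iff₀ (zpow_pos hp γ)]

lemma norm_zpow_mul_sub_le_iff (γ k : ℤ) (m b : ℚ_[p]) :
    ‖(p : ℚ_[p]) ^ γ * b - m‖ ≤ (p : ℝ) ^ k ↔
      b ∈ closedBall ((p : ℚ_[p]) ^ (-γ) * m) ((p : ℝ) ^ (γ + k)) := by
  have hp : (p : ℚ_[p]) ≠ 0 := by exact_mod_cast (Fact.out : p.Prime).ne_zero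
  have h : (p : ℚ_[p]) ^ γ * b - m = (p : ℚ_[p]) ^ γ * (b - (p : ℚ_[p]) ^ (-γ) * m) := by
    rw [mul_sub, ← mul_assoc, ← zpow_add₀ hp, add_neg_cancel, zpow_zero, one_mul]
  rw [h, norm_zpow_mul_le_zpow_iff, mem_closedBall, dist_eq_norm]

end Padic

theorem stmt_7_general (p : ℕ) [Fact p.Prime] (γ₁ γ₂ : ℤ) (hγ : γ₁ ≤ γ₂) (n₁ n₂ : ℚ_[p])
    (a : ℚ_[p]) :
    ((∃ b : ℚ_[p], ‖(p : ℚ_[p]) ^ γ₁ * b - n₁ * (1 - a)‖ ≤ (p : ℝ) ^ (-1 : ℤ) ∧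
        ‖(p : ℚ_[p]) ^ γ₂ * b - n₂ * (1 - a)‖ ≤ (p : ℝ) ^ (-1 : ℤ)) ↔
      ‖((p : ℚ_[p]) ^ (-γ₁) * n₁ - (p : ℚ_[p]) ^ (-γ₂) * n₂) * (1 - a)‖ ≤ (p : ℝ) ^ (γ₂ - 1)) ∧
    (‖((p : ℚ_[p]) ^ (-γ₁) * n₁ - (p : ℚ_[p]) ^ (-γ₂) * n₂) * (1 - a)‖ ≤ (p : ℝ) ^ (γ₂ - 1) →
      {b : ℚ_[p] | ‖(p : ℚ_[p]) ^ γ₁ * b - n₁ * (1 - a)‖ ≤ (p : ℝ) ^ (-1 : ℤ) ∧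
          ‖(p : ℚ_[p]) ^ γ₂ * b - n₂ * (1 - a)‖ ≤ (p : ℝ) ^ (-1 : ℤ)} =
        {b : ℚ_[p] | ‖b - (p : ℚ_[p]) ^ (-γ₁) * n₁ * (1 - a)‖ ≤ (p : ℝ) ^ (γ₁ - 1)}) := by
  set c₁ := (p : ℚ_[p]) ^ (-γ₁) * (n₁ * (1 - a))
  set c₂ := (p : ℚ_[p]) ^ (-γ₂) * (n₂ * (1 - a))
  have hdist : ‖((p : ℚ_[p]) ^ (-γ₁) * n₁ - (p : ℚ_[p]) ^ (-γ₂) * n₂) * (1 - a)‖ = dist c₁ c₂ := by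
    rw [dist_eq_norm]; congr 1; simp only [c₁, c₂]; ring
  have hball : {b : ℚ_[p] | ‖b - (p : ℚ_[p]) ^ (-γ₁) * n₁ * (1 - a)‖ ≤ (p : ℝ) ^ (γ₁ - 1)} =
      closedBall c₁ ((p : ℝ) ^ (γ₁ - 1)) := by
    ext b; rw [mem_closedBall, dist_eq_norm, mul_assoc]; rfl
  have hr : (p : ℝ) ^ (γ₁ - 1) ≤ (p : ℝ) ^ (γ₂ - 1) :=
    zpow_le_zpow_right₀ (by exact_mod_cast (Fact.out : p.Prime).one_le) (by omega)
  simp only [Padic.norm_zpow_mul_sub_le_iff, ← sub_eq_add_neg, hdist, hball]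
  refine ⟨IsUltrametricDist.inter_closedBall_nonempty_iff (by positivity) hr, fun h => ?_⟩
  exact Set.inter_eq_left.mpr (IsUltrametricDist.closedBall_subset_closedBall_of_dist_le hr h)

theorem stmt_7 (p : ℕ) [Fact p.Prime] (γ₁ γ₂ : ℤ) (hγ : γ₁ ≤ γ₂) (n₁ n₂ : ℚ_[p])
    (a : ℚ_[p]) (ha : ‖1 - a‖ ≤ (p : ℝ) ^ (-1 : ℤ)) :
    ((∃ b : ℚ_[p], ‖(p : ℚ_[p]) ^ γ₁ * b - n₁ * (1 - a)‖ ≤ (p : ℝ) ^ (-1 : ℤ) ∧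
        ‖(p : ℚ_[p]) ^ γ₂ * b - n₂ * (1 - a)‖ ≤ (p : ℝ) ^ (-1 : ℤ)) ↔
      ‖((p : ℚ_[p]) ^ (-γ₁) * n₁ - (p : ℚ_[p]) ^ (-γ₂) * n₂) * (1 - a)‖ ≤ (p : ℝ) ^ (γ₂ - 1)) ∧
    (‖((p : ℚ_[p]) ^ (-γ₁) * n₁ - (p : ℚ_[p]) ^ (-γ₂) * n₂) * (1 - a)‖ ≤ (p : ℝ) ^ (γ₂ - 1) →
      {b : ℚ_[p] | ‖(p : ℚ_[p]) ^ γ₁ * b - n₁ * (1 - a)‖ ≤ (p : ℝ) ^ (-1 : ℤ) ∧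
          ‖(p : ℚ_[p]) ^ γ₂ * b - n₂ * (1 - a)‖ ≤ (p : ℝ) ^ (-1 : ℤ)} =
        {b : ℚ_[p] | ‖b - (p : ℚ_[p]) ^ (-γ₁) * n₁ * (1 - a)‖ ≤ (p : ℝ) ^ (γ₁ - 1)}) :=
  stmt_7_general p γ₁ γ₂ hγ n₁ n₂ a
end

section
/- Let I be a finite nonempty index set and for each i ∈ I let γ_i ∈ ℤ and n_i ∈ R₀. Define γ_A ≥ 1 by p^{-γ_A} = min( p^{-1}, min{ max(p^{γ_i−1}, p^{γ_j−1}) / |p^{-γ_i} n_i − p^{-γ_j} n_j|_p : i, j ∈ I, p^{-γ_i} n_i ≠ p^{-γ_j} n_j } ) (with the inner minimum taken to be p^{-1} if no such pair exists). Let i₀ ∈ I be any index with γ_{i₀} = min_{i∈I} γ_i, and set γ₀ = γ_{i₀}, n₀ = n_{i₀}. Then for all a, b ∈ ℚ_p: [|a − 1|_p ≤ p^{-1} and for every i ∈ I, |p^{γ_i} b − n_i(1−a)|_p ≤ p^{-1}] holds if and only if [|1 − a|_p ≤ p^{-γ_A} and |b − p^{-γ₀} n₀ (1−a)|_p ≤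 p^{γ₀−1}]. -/
open MeasureTheory

/-!
Dividing the `i`-th condition by `p^{γ_i}` turns it into `b ∈ B(m_i (1 - a), p^{γ_i - 1})` with
`m_i = p^{-γ_i} n_i`. In an ultrametric space a family of closed balls has a common point `b`
iff `b` lies in a smallest one and any two centres are within the larger of their radii;
the latter says `|m_i - m_j|_p |1 - a|_p ≤ max(p^{γ_i - 1}, p^{γ_j - 1})`, which together with
`|1 - a|_p ≤ p^{-1}` is exactly `|1 - a|_p ≤ p^{-γ_A}`.
-/

theorem IsUltrametricDist.forall_dist_le_iff {X ι : Type*} [PseudoMetricSpace X]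
    [IsUltrametricDist X] (c : ι → X) (r : ι → ℝ) {i₀ : ι} (hi₀ : ∀ i, r i₀ ≤ r i) (x : X) :
    (∀ i, dist x (c i) ≤ r i) ↔
      dist x (c i₀) ≤ r i₀ ∧ ∀ i j, dist (c i) (c j) ≤ max (r i) (r j) := by
  refine ⟨fun h => ⟨h i₀, fun i j => ?_⟩, fun ⟨h₀, hc⟩ i => ?_⟩
  · calc dist (c i) (c j) ≤ max (dist (c i) x) (dist x (c j)) := dist_triangle_max _ _ _
      _ ≤ max (r i) (r j) := by rw [dist_comm]; exact max_le_max (h i) (h j)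
  · calc dist x (c i) ≤ max (dist x (c i₀)) (dist (c i₀) (c i)) := dist_triangle_max _ _ _
      _ ≤ r i := max_le (h₀.trans (hi₀ i)) ((hc i₀ i).trans (max_le (hi₀ i) le_rfl))

theorem le_min_dite_inf'_iff {α β : Type*} [LinearOrder β] (s : Finset α) (f : α → β)
    (c x : β) :
    x ≤ min c (if h : s.Nonempty then s.inf' h f else c) ↔ x ≤ c ∧ ∀ a ∈ s, x ≤ f a := by
  by_cases h : s.Nonempty
  · rw [dif_pos h, le_min_iff, Finset.le_inf'_iff]
  · rw [dif_neg h, min_self, Finset.not_nonempty_iff_eq_empty.mp h]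
    simp

theorem forall_norm_le_div_norm_sub_iff {ι K : Type*} [NormedField K] (m : ι → K)
    (R : ι → ι → ℝ) (hR : ∀ i j, 0 ≤ R i j) (u : K) :
    (∀ q : ι × ι, m q.1 ≠ m q.2 → ‖u‖ ≤ R q.1 q.2 / ‖m q.1 - m q.2‖) ↔
      ∀ i j, ‖(m i - m j) * u‖ ≤ R i j := by
  refine ⟨fun h i j => ?_, fun h q hq => ?_⟩
  · by_cases hij : m i = m j
    · simpa [hij] using hR i j
    · have hpos : 0 < ‖m i - m j‖ := norm_pos_iff.mpr (sub_ne_zero.mpr hij)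
      rw [norm_mul, mul_comm, ← le_div_iff₀ hpos]
      exact h (i, j) hij
  · rw [le_div_iff₀ (norm_pos_iff.mpr (sub_ne_zero.mpr hq)), mul_comm, ← norm_mul]
    exact h q.1 q.2

theorem Padic.norm_p_zpow_mul_sub_le_inv_iff {p : ℕ} [Fact p.Prime] (γ : ℤ) (b y : ℚ_[p]) :
    ‖(p : ℚ_[p]) ^ γ * b - y‖ ≤ (p : ℝ) ^ (-1 : ℤ) ↔
      ‖b - (p : ℚ_[p]) ^ (-γ) * y‖ ≤ (p : ℝ) ^ (γ - 1) := by
  have hp : (p : ℚ_[p]) ≠ 0 := by exact_mod_cast (Fact.out : p.Prime).ne_zero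
  have hp' : (0 : ℝ) < p := by exact_mod_cast (Fact.out : p.Prime).pos
  have hfactor : (p : ℚ_[p]) ^ γ * b - y = (p : ℚ_[p]) ^ γ * (b - (p : ℚ_[p]) ^ (-γ) * y) := by
    rw [mul_sub, ← mul_assoc, ← zpow_add₀ hp, add_neg_cancel, zpow_zero, one_mul]
  rw [hfactor, norm_mul, Padic.norm_p_zpow, ← le_div_iff₀' (zpow_pos hp' _), ← zpow_sub₀ hp'.ne']
  ring_nf

open scoped Classical in
theorem stmt_8_general (p : ℕ) [Fact p.Prime] (ι : Type) [Fintype ι]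
    (γv : ι → ℤ) (nv : ι → ℚ_[p])
    (γA : ℤ)
    (hγA : ((p : ℝ) ^ (-γA) =
      min ((p : ℝ) ^ (-1 : ℤ))
        (if h : (Finset.univ.filter (fun q : ι × ι =>
            (p : ℚ_[p]) ^ (-γv q.1) * nv q.1 ≠ (p : ℚ_[p]) ^ (-γv q.2) * nv q.2)).Nonempty then
          (Finset.univ.filter (fun q : ι × ι =>
            (p : ℚ_[p]) ^ (-γv q.1) * nv q.1 ≠ (p : ℚ_[p]) ^ (-γv q.2) * nv q.2)).inf' h
            (fun q => max ((p : ℝ) ^ (γv q.1 - 1)) ((p : ℝ) ^ (γv q.2 - 1)) /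
              ‖(p : ℚ_[p]) ^ (-γv q.1) * nv q.1 - (p : ℚ_[p]) ^ (-γv q.2) * nv q.2‖)
        else (p : ℝ) ^ (-1 : ℤ))))
    (i₀ : ι) (hi₀ : ∀ i, γv i₀ ≤ γv i) :
    ∀ a b : ℚ_[p],
      ((‖a - 1‖ ≤ (p : ℝ) ^ (-1 : ℤ) ∧
          ∀ i, ‖(p : ℚ_[p]) ^ (γv i) * b - nv i * (1 - a)‖ ≤ (p : ℝ) ^ (-1 : ℤ)) ↔
        (‖1 - a‖ ≤ (p : ℝ) ^ (-γA) ∧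
          ‖b - (p : ℚ_[p]) ^ (-(γv i₀)) * nv i₀ * (1 - a)‖ ≤ (p : ℝ) ^ (γv i₀ - 1))) := by
  intro a b
  have hp : (1 : ℝ) < p := by exact_mod_cast (Fact.out : p.Prime).one_lt
  set m : ι → ℚ_[p] := fun i => (p : ℚ_[p]) ^ (-γv i) * nv i
  set r : ι → ℝ := fun i => (p : ℝ) ^ (γv i - 1)
  have hballs := IsUltrametricDist.forall_dist_le_iff (fun i => m i * (1 - a)) r
    (fun i => zpow_le_zpow_right₀ hp.le (by linarith [hi₀ i])) b
  simp only [dist_eq_norm, ← sub_mul] at hballs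
  have hpairs := forall_norm_le_div_norm_sub_iff m (fun i j => max (r i) (r j))
    (fun i j => le_max_of_le_left (zpow_nonneg (by linarith) _)) (1 - a)
  simp only [Padic.norm_p_zpow_mul_sub_le_inv_iff, ← mul_assoc, norm_sub_rev a 1, hγA,
    le_min_dite_inf'_iff, Finset.mem_filter, Finset.mem_univ, true_and]
  simp only [m, r] at hballs hpairs
  rw [hballs, hpairs]
  tauto

open scoped Classical in
theorem stmt_8 (p : ℕ) [Fact p.Prime] (ι : Type) [Fintype ι] [Nonempty ι]
    (γv : ι → ℤ) (nv : ι → ℚ_[p]) (hn : ∀ i, nv i ∈ Rset p 0)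
    (γA : ℤ) (hγA1 : 1 ≤ γA)
    (hγA : ((p : ℝ) ^ (-γA) =
      min ((p : ℝ) ^ (-1 : ℤ))
        (if h : (Finset.univ.filter (fun q : ι × ι =>
            (p : ℚ_[p]) ^ (-γv q.1) * nv q.1 ≠ (p : ℚ_[p]) ^ (-γv q.2) * nv q.2)).Nonempty then
          (Finset.univ.filter (fun q : ι × ι =>
            (p : ℚ_[p]) ^ (-γv q.1) * nv q.1 ≠ (p : ℚ_[p]) ^ (-γv q.2) * nv q.2)).inf' h
            (fun q => max ((p : ℝ) ^ (γv q.1 - 1)) ((p : ℝ) ^ (γv q.2 - 1)) /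
              ‖(p : ℚ_[p]) ^ (-γv q.1) * nv q.1 - (p : ℚ_[p]) ^ (-γv q.2) * nv q.2‖)
        else (p : ℝ) ^ (-1 : ℤ))))
    (i₀ : ι) (hi₀ : ∀ i, γv i₀ ≤ γv i) :
    ∀ a b : ℚ_[p],
      ((‖a - 1‖ ≤ (p : ℝ) ^ (-1 : ℤ) ∧
          ∀ i, ‖(p : ℚ_[p]) ^ (γv i) * b - nv i * (1 - a)‖ ≤ (p : ℝ) ^ (-1 : ℤ)) ↔
        (‖1 - a‖ ≤ (p : ℝ) ^ (-γA) ∧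
          ‖b - (p : ℚ_[p]) ^ (-(γv i₀)) * nv i₀ * (1 - a)‖ ≤ (p : ℝ) ^ (γv i₀ - 1))) :=
  stmt_8_general p ι γv nv γA hγA i₀ hi₀
end

section
/- Let σ ∈ ℤ, c ∈ ℚ_p, and let r ∈ ℤ satisfy r ≥ −σ. Then the set {n ∈ R_σ : |n − c|_p ≤ p^r} is finite and has exactly p^{r+σ} elements. -/
open MeasureTheory

/-! An element of `R_σ` whose digits start at `p^{-δ}` is `m p^{-δ}` with `0 ≤ m < p^{σ+δ}`, and
once `δ ≥ -σ` these are exactly the elements of `R_σ` in the ball `|x|_p ≤ p^δ`. Choosing `δ ≥ r`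
so large that this ball contains `|x - c|_p ≤ p^r`, the condition `|m p^{-δ} - c|_p ≤ p^r` becomes a
congruence `m ≡ a (mod p^{δ-r})`, which has `p^{σ+δ} / p^{δ-r} = p^{r+σ}` solutions `m < p^{σ+δ}`. -/

open Finset Metric

lemma lt_pow_iff_exists_digits {p : ℕ} (hp : 0 < p) {N m : ℕ} :
    m < p ^ N ↔ ∃ d : ℕ → ℕ, (∀ j, d j < p) ∧ m = ∑ j ∈ range N, d j * p ^ j := by
  constructor
  · intro hm
    set f := finFunctionFinEquiv.symm ⟨m, hm⟩
    refine ⟨fun j => if h : j < N then f ⟨j, h⟩ else 0, fun j => ?_, ?_⟩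
    · dsimp only
      split_ifs
      exacts [(f _).isLt, hp]
    · rw [← Fin.sum_univ_eq_sum_range (fun j => (if h : j < N then (f ⟨j, h⟩ : ℕ) else 0) * p ^ j)]
      simp only [Fin.is_lt, dif_pos, Fin.eta]
      rw [← finFunctionFinEquiv_apply, Equiv.apply_symm_apply]
  · rintro ⟨d, hd, rfl⟩
    rw [← Fin.sum_univ_eq_sum_range (fun j => d j * p ^ j)]
    exact (finFunctionFinEquiv (fun j : Fin N => (⟨d j, hd j⟩ : Fin p))).isLt

lemma sum_Icc_neg_eq_sum_range {M : Type*} [AddCommMonoid M] (δ : ℕ) (σ : ℤ) (f : ℤ → M) :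
    ∑ l ∈ Icc (-(δ : ℤ)) (σ - 1), f l = ∑ j ∈ range (σ + δ).toNat, f (j - δ) := by
  refine sum_nbij' (fun l => (l + δ).toNat) (fun j => (j : ℤ) - δ) ?_ ?_ ?_ ?_ ?_ <;>
    intro l hl <;> simp only [mem_Icc, mem_range] at hl ⊢
  all_goals first | omega | (congr 1; omega)

lemma Nat.card_filter_modEq_range_of_dvd {r b : ℕ} (hr : 0 < r) (hrb : r ∣ b) (a : ℕ) :
    #{m ∈ range b | m ≡ a [MOD r]} = b / r := by
  rw [← Nat.count_eq_card_filter_range, Nat.count_modEq_card _ hr, Nat.mod_eq_zero_of_dvd hrb]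
  simp

section Padic

variable {p : ℕ} [Fact p.Prime]

lemma natCast_prime_ne_zero : (p : ℚ_[p]) ≠ 0 := by
  exact_mod_cast (Fact.out : p.Prime).ne_zero

def RsetLevel (p : ℕ) [Fact p.Prime] (σ : ℤ) (δ : ℕ) : Set ℚ_[p] :=
  (fun m : ℕ => (m : ℚ_[p]) * (p : ℚ_[p]) ^ (-(δ : ℤ))) '' Set.Iio (p ^ (σ + δ).toNat)

lemma mem_Rset_iff {σ : ℤ} {x : ℚ_[p]} : x ∈ Rset p σ ↔ ∃ δ : ℕ, x ∈ RsetLevel p σ δ := by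
  have hp : 0 < p := (Fact.out : p.Prime).pos
  have digit_sum (δ : ℕ) (e : ℕ → ℕ) :
      ∑ l ∈ Icc (-(δ : ℤ)) (σ - 1), (e (l + δ).toNat : ℚ_[p]) * (p : ℚ_[p]) ^ l =
        ((∑ j ∈ range (σ + δ).toNat, e j * p ^ j : ℕ) : ℚ_[p]) * (p : ℚ_[p]) ^ (-(δ : ℤ)) := by
    rw [sum_Icc_neg_eq_sum_range, Nat.cast_sum, sum_mul]
    refine sum_congr rfl fun j _ => ?_
    rw [sub_add_cancel, Int.toNat_natCast, sub_eq_add_neg, zpow_add₀ natCast_prime_ne_zero, zpow_natCast]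
    push_cast
    ring
  constructor
  · rintro ⟨δ, d, hd, rfl⟩
    refine ⟨δ, _, (lt_pow_iff_exists_digits hp).2 ⟨fun j => d (j - δ), fun j => hd _, rfl⟩, ?_⟩
    dsimp only
    rw [← digit_sum]
    refine sum_congr rfl fun l hl => ?_
    rw [mem_Icc] at hl
    rw [Int.toNat_of_nonneg (by omega), add_sub_cancel_right]
  · rintro ⟨δ, m, hm, rfl⟩
    obtain ⟨e, he, rfl⟩ := (lt_pow_iff_exists_digits hp).1 hm
    exact ⟨δ, fun l => e (l + δ).toNat, fun l => he _, (digit_sum δ e).symm⟩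

lemma RsetLevel_mono {σ : ℤ} {δ δ' : ℕ} (h : δ ≤ δ') : RsetLevel p σ δ ⊆ RsetLevel p σ δ' := by
  rintro _ ⟨m, hm, rfl⟩
  refine ⟨m * p ^ (δ' - δ), ?_, ?_⟩
  · rcases Nat.eq_zero_or_pos m with rfl | hm0
    · simp only [zero_mul, Set.mem_Iio]
      exact pow_pos (Fact.out : p.Prime).pos _
    -- `m ≠ 0` forces `0 ≤ σ + δ`, so the exponent grows by exactly `δ' - δ`
    · have hσ : 0 < (σ + δ).toNat := Nat.pos_of_ne_zero fun h0 => by simp_all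
      rw [Set.mem_Iio, show (σ + δ').toNat = (σ + δ).toNat + (δ' - δ) by omega, pow_add]
      exact Nat.mul_lt_mul_of_pos_right hm (pow_pos (Fact.out : p.Prime).pos _)
  · push_cast
    rw [mul_assoc, ← zpow_natCast, ← zpow_add₀ natCast_prime_ne_zero]
    congr 2
    omega

lemma RsetLevel_subset_closedBall {σ : ℤ} {δ : ℕ} :
    RsetLevel p σ δ ⊆ closedBall 0 ((p : ℝ) ^ (δ : ℤ)) := by
  rintro _ ⟨m, -, rfl⟩
  rw [mem_closedBall_zero_iff, norm_mul, Padic.norm_p_zpow, neg_neg]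
  exact mul_le_of_le_one_left (by positivity) (IsUltrametricDist.norm_natCast_le_one _ m)

lemma RsetLevel_inter_closedBall_subset {σ : ℤ} {δ δ' : ℕ} (hσ : -σ ≤ δ) (h : δ ≤ δ') :
    RsetLevel p σ δ' ∩ closedBall 0 ((p : ℝ) ^ (δ : ℤ)) ⊆ RsetLevel p σ δ := by
  rintro _ ⟨⟨m, hm, rfl⟩, hx⟩
  have hp : (0 : ℝ) < p := by exact_mod_cast (Fact.out : p.Prime).pos
  obtain ⟨k, rfl⟩ : p ^ (δ' - δ) ∣ m := by
    rw [mem_closedBall_zero_iff, norm_mul, Padic.norm_p_zpow, neg_neg,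
      ← le_div_iff₀ (zpow_pos hp _), ← zpow_sub₀ hp.ne',
      show (δ : ℤ) - δ' = -((δ' - δ : ℕ) : ℤ) by omega] at hx
    exact_mod_cast (Padic.norm_int_le_pow_iff_dvd (m : ℤ) (δ' - δ)).1 (by exact_mod_cast hx)
  refine ⟨k, ?_, ?_⟩
  · rw [Set.mem_Iio, show (σ + δ').toNat = (σ + δ).toNat + (δ' - δ) by omega, pow_add,
      mul_comm] at hm
    exact Nat.lt_of_mul_lt_mul_right hm
  · push_cast
    rw [mul_comm ((p : ℚ_[p]) ^ (δ' - δ)), mul_assoc, ← zpow_natCast,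
      ← zpow_add₀ natCast_prime_ne_zero]
    congr 2
    omega

lemma Rset_inter_closedBall_zero {σ : ℤ} {δ : ℕ} (hσ : -σ ≤ δ) :
    Rset p σ ∩ closedBall 0 ((p : ℝ) ^ (δ : ℤ)) = RsetLevel p σ δ := by
  refine subset_antisymm ?_ fun x hx => ⟨mem_Rset_iff.2 ⟨δ, hx⟩, RsetLevel_subset_closedBall hx⟩
  rintro x ⟨hx, hxδ⟩
  obtain ⟨δ', hx⟩ := mem_Rset_iff.1 hx
  rcases le_total δ' δ with h | h
  · exact RsetLevel_mono h hx
  · exact RsetLevel_inter_closedBall_subset hσ h ⟨hx, hxδ⟩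

lemma Rset_inter_closedBall {σ r : ℤ} {δ : ℕ} {c : ℚ_[p]} (hσ : -σ ≤ δ) (hr : r ≤ δ)
    (hc : ‖c‖ ≤ (p : ℝ) ^ (δ : ℤ)) :
    Rset p σ ∩ closedBall c ((p : ℝ) ^ r) = RsetLevel p σ δ ∩ closedBall c ((p : ℝ) ^ r) := by
  have hp : (1 : ℝ) ≤ p := by exact_mod_cast (Fact.out : p.Prime).one_le
  have hball : closedBall c ((p : ℝ) ^ r) ⊆ closedBall 0 ((p : ℝ) ^ (δ : ℤ)) := by
    rw [IsUltrametricDist.closedBall_eq_of_mem (mem_closedBall_zero_iff.2 hc)]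
    exact closedBall_subset_closedBall (zpow_le_zpow_right₀ hp hr)
  rw [← Rset_inter_closedBall_zero hσ, Set.inter_assoc, Set.inter_eq_right.2 hball]

lemma mul_zpow_mem_closedBall_iff (x c : ℚ_[p]) (k r : ℤ) :
    x * (p : ℚ_[p]) ^ k ∈ closedBall c ((p : ℝ) ^ r) ↔
      x ∈ closedBall (c * (p : ℚ_[p]) ^ (-k)) ((p : ℝ) ^ (r + k)) := by
  have hp : (0 : ℝ) < p := by exact_mod_cast (Fact.out : p.Prime).pos
  have : x * (p : ℚ_[p]) ^ k - c = (x - c * (p : ℚ_[p]) ^ (-k)) * (p : ℚ_[p]) ^ k := by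
    rw [sub_mul, mul_assoc, ← zpow_add₀ natCast_prime_ne_zero, neg_add_cancel, zpow_zero, mul_one]
  rw [mem_closedBall, mem_closedBall, dist_eq_norm, dist_eq_norm, this, norm_mul,
    Padic.norm_p_zpow, ← le_div_iff₀ (zpow_pos hp _), div_eq_mul_inv, ← zpow_neg, neg_neg,
    ← zpow_add₀ hp.ne']

lemma exists_natCast_mem_closedBall_iff_modEq {x : ℚ_[p]} (hx : ‖x‖ ≤ 1) (u : ℕ) :
    ∃ a : ℕ, ∀ m : ℕ,
      (m : ℚ_[p]) ∈ closedBall x ((p : ℝ) ^ (-(u : ℤ))) ↔ m ≡ a [MOD p ^ u] := by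
  let y : ℤ_[p] := ⟨x, hx⟩
  refine ⟨y.appr u, fun m => ?_⟩
  have ha : ((y.appr u : ℕ) : ℚ_[p]) ∈ closedBall x ((p : ℝ) ^ (-(u : ℤ))) := by
    rw [mem_closedBall, dist_comm, dist_eq_norm]
    exact_mod_cast (PadicInt.norm_le_pow_iff_mem_span_pow _ u).2 (PadicInt.appr_spec u y)
  rw [IsUltrametricDist.closedBall_eq_of_mem ha, mem_closedBall, dist_eq_norm, Nat.ModEq.comm,
    Nat.modEq_iff_dvd, Nat.cast_pow, ← Padic.norm_int_le_pow_iff_dvd]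
  norm_cast


lemma Rset_inter_closedBall_eq_image {σ r : ℤ} {δ : ℕ} {c : ℚ_[p]} {a : ℕ} (hσ : -σ ≤ δ)
    (hr : r ≤ δ) (hc : ‖c‖ ≤ (p : ℝ) ^ (δ : ℤ))
    (ha : ∀ m : ℕ, (m : ℚ_[p]) ∈ closedBall (c * (p : ℚ_[p]) ^ (δ : ℤ))
      ((p : ℝ) ^ (-((δ - r).toNat : ℤ))) ↔ m ≡ a [MOD p ^ (δ - r).toNat]) :
    Rset p σ ∩ closedBall c ((p : ℝ) ^ r) =
      (fun m : ℕ => (m : ℚ_[p]) * (p : ℚ_[p]) ^ (-(δ : ℤ))) ''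
        {m | m < p ^ (σ + δ).toNat ∧ m ≡ a [MOD p ^ (δ - r).toNat]} := by
  rw [Rset_inter_closedBall hσ hr hc, RsetLevel, ← Set.image_inter_preimage]
  congr 1
  ext m
  simp only [Set.mem_inter_iff, Set.mem_Iio, Set.mem_preimage, mul_zpow_mem_closedBall_iff,
    neg_neg, ← ha, Set.mem_ofPred_eq]
  rw [show r + -(δ : ℤ) = -((δ - r).toNat : ℤ) by omega]

end Padic

theorem stmt_10 (p : ℕ) [Fact p.Prime] (σ : ℤ) (c : ℚ_[p]) (r : ℤ) (hr : -σ ≤ r) :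
    {n : ℚ_[p] | n ∈ Rset p σ ∧ ‖n - c‖ ≤ (p : ℝ) ^ r}.Finite ∧
    Nat.card {n : ℚ_[p] | n ∈ Rset p σ ∧ ‖n - c‖ ≤ (p : ℝ) ^ r} = p ^ (r + σ).toNat := by
  have hp0 : 0 < p := (Fact.out : p.Prime).pos
  have hp : (1 : ℝ) < p := by exact_mod_cast (Fact.out : p.Prime).one_lt
  obtain ⟨δ, hσδ, hrδ, hcδ⟩ : ∃ δ : ℕ, -σ ≤ δ ∧ r ≤ δ ∧ ‖c‖ ≤ (p : ℝ) ^ (δ : ℤ) := by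
    obtain ⟨k, hk⟩ := pow_unbounded_of_one_lt ‖c‖ hp
    refine ⟨max k (max r.toNat (-σ).toNat), by omega, by omega, ?_⟩
    rw [zpow_natCast]
    exact hk.le.trans (pow_le_pow_right₀ hp.le (le_max_left _ _))
  obtain ⟨a, ha⟩ := exists_natCast_mem_closedBall_iff_modEq (x := c * (p : ℚ_[p]) ^ (δ : ℤ))
    (by simpa using (mul_zpow_mem_closedBall_iff c 0 δ 0).2 (by simpa using hcδ)) (δ - r).toNat
  have hφ : Function.Injective fun m : ℕ => (m : ℚ_[p]) * (p : ℚ_[p]) ^ (-(δ : ℤ)) :=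
    fun m m' h => by exact_mod_cast mul_right_cancel₀ (zpow_ne_zero _ natCast_prime_ne_zero) h
  have hS : {n | n ∈ Rset p σ ∧ ‖n - c‖ ≤ (p : ℝ) ^ r} = _ :=
    Rset_inter_closedBall_eq_image hσδ hrδ hcδ ha
  have hfilter : {m | m < p ^ (σ + δ).toNat ∧ m ≡ a [MOD p ^ (δ - r).toNat]} =
      ↑{m ∈ range (p ^ (σ + δ).toNat) | m ≡ a [MOD p ^ (δ - r).toNat]} := by
    simp
  rw [hS, hfilter, Nat.card_coe_set_eq, Set.ncard_image_of_injective _ hφ, Set.ncard_coe_finset,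
    Nat.card_filter_modEq_range_of_dvd (pow_pos hp0 _) (pow_dvd_pow _ (by omega)),
    Nat.pow_div (by omega) hp0]
  exact ⟨(finite_toSet _).image _, by congr 1; omega⟩
end
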